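/- arXiv:1509.05057 — 3 statements merged into one kernel-verified Lean document; each statement's English description precedes it below -/
import Mathlib

section
/- For any finite simple graph G, the maximum of the difference d(X) = |X| - |N(X)| over all subsets X of V(G) equals the maximum of d(S) over all independent subsets S of V(G). -/
open Set

variable {V : Type*} [Fintype V]

/-- `S` is an independent set in `G`: no two of its vertices are adjacent. -/
def IsIndep (G : SimpleGraph V) (S : Set V) : Prop :=
  ∀ u ∈ S, ∀ v ∈ S, ¬ G.Adj u v

/-- The neighborhood `N(X)` of a set of vertices. -/
def nbhd (G : SimpleGraph V) (X : Set V) : Set V := {v | ∃ u ∈ X, G.Adj u v}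

/-- The difference `d(X) = |X| - |N(X)|` computed in the induced subgraph `G[W]`
(neighborhoods are intersected with `W`). -/
noncomputable def dOn (G : SimpleGraph V) (W X : Set V) : ℤ :=
  (X.ncard : ℤ) - ((nbhd G X ∩ W).ncard : ℤ)

/-- The difference `d(X) = |X| - |N(X)|` in `G`. -/
noncomputable def dG (G : SimpleGraph V) (X : Set V) : ℤ := dOn G Set.univ X

/-- `S` is a critical independent set of the induced subgraph `G[W]`:
it is an independent subset of `W` whose difference attains
`max {d(Y) : Y ⊆ W}` (the critical difference of `G[W]`). -/
def IsCritIndepOn (G : SimpleGraph V) (W S : Set V) : Prop :=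
  S ⊆ W ∧ IsIndep G S ∧ ∀ Y ⊆ W, dOn G W Y ≤ dOn G W S

/-- `S` is a critical independent set of `G`. -/
def IsCritIndep (G : SimpleGraph V) (S : Set V) : Prop := IsCritIndepOn G Set.univ S

/-- A maximum critical independent set of `G[W]`: a critical independent set of
largest cardinality. -/
def IsMaxCritIndepOn (G : SimpleGraph V) (W S : Set V) : Prop :=
  IsCritIndepOn G W S ∧ ∀ T, IsCritIndepOn G W T → T.ncard ≤ S.ncard

/-- A maximum critical independent set of `G`. -/
def IsMaxCritIndep (G : SimpleGraph V) (S : Set V) : Prop := IsMaxCritIndepOn G Set.univ S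

/-- A maximum independent set of the induced subgraph `G[W]`. -/
def IsMaxIndepOn (G : SimpleGraph V) (W S : Set V) : Prop :=
  S ⊆ W ∧ IsIndep G S ∧ ∀ T ⊆ W, IsIndep G T → T.ncard ≤ S.ncard

/-- A maximum independent set of `G`. -/
def IsMaxIndep (G : SimpleGraph V) (S : Set V) : Prop := IsMaxIndepOn G Set.univ S

/-- The independence number of the induced subgraph `G[W]`. -/
noncomputable def alphaOn (G : SimpleGraph V) (W : Set V) : ℕ :=
  sSup {n | ∃ S ⊆ W, IsIndep G S ∧ S.ncard = n}

/-- The independence number `α(G)`. -/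
noncomputable def alpha (G : SimpleGraph V) : ℕ := alphaOn G Set.univ

/-- The maximum matching number `μ(G)`. -/
noncomputable def mu (G : SimpleGraph V) : ℕ :=
  sSup {n | ∃ M : G.Subgraph, M.IsMatching ∧ M.edgeSet.ncard = n}

/-- `G` is a König-Egerváry graph: `α(G) + μ(G) = |V(G)|`. -/
def IsKE (G : SimpleGraph V) : Prop := alpha G + mu G = Fintype.card V

/-- `nucleus(G[W])`: intersection of all maximum critical independent sets of `G[W]`. -/
def nucleusOn (G : SimpleGraph V) (W : Set V) : Set V := ⋂₀ {S | IsMaxCritIndepOn G W S}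

/-- `nucleus(G)`. -/
def nucleus (G : SimpleGraph V) : Set V := nucleusOn G Set.univ

/-- `diadem(G[W])`: union of all maximum critical independent sets of `G[W]`. -/
def diademOn (G : SimpleGraph V) (W : Set V) : Set V := ⋃₀ {S | IsMaxCritIndepOn G W S}

/-- `diadem(G)`. -/
def diadem (G : SimpleGraph V) : Set V := diademOn G Set.univ

/-- `ker(G)`: intersection of all critical independent sets of `G`. -/
def kerG (G : SimpleGraph V) : Set V := ⋂₀ {S | IsCritIndep G S}

/-- `core(G)`: intersection of all maximum independent sets of `G`. -/
def core (G : SimpleGraph V) : Set V := ⋂₀ {S | IsMaxIndep G S}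

/-- `corona(G)`: union of all maximum independent sets of `G`. -/
def corona (G : SimpleGraph V) : Set V := ⋃₀ {S | IsMaxIndep G S}

/-
Deleting from `X` its own neighbourhood `N = N(X)` gives an independent set `S = X \ N`
whose difference is at least `d(X)`: the vertices removed are `X ∩ N`, and since no vertex
of `X ∩ N` is adjacent to `S`, the sets `N(S)` and `X ∩ N` are disjoint subsets of `N`, so
`N(S)` loses at least as many vertices as `X` does.
-/

section

variable {α : Type*} (G : SimpleGraph α)

lemma nbhd_mono {X Y : Set α} (h : X ⊆ Y) : nbhd G X ⊆ nbhd G Y :=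
  fun _ ⟨u, hu, hadj⟩ => ⟨u, h hu, hadj⟩

lemma isIndep_diff_nbhd (X : Set α) : IsIndep G (X \ nbhd G X) :=
  fun u hu _ hv hadj => hv.2 ⟨u, hu.1, hadj⟩

lemma disjoint_nbhd_diff_nbhd_inter_nbhd (X : Set α) :
    Disjoint (nbhd G (X \ nbhd G X)) (X ∩ nbhd G X) :=
  Set.disjoint_left.2 fun w ⟨_, hu, hadj⟩ hw => hu.2 ⟨w, hw.1, hadj.symm⟩

lemma dG_eq (X : Set α) : dG G X = X.ncard - (nbhd G X).ncard := by
  rw [dG, dOn, Set.inter_univ]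

lemma dG_le_dG_diff_nbhd [Finite α] (X : Set α) : dG G X ≤ dG G (X \ nbhd G X) := by
  rw [dG_eq, dG_eq]
  set N := nbhd G X
  have hX : (X ∩ N).ncard + (X \ N).ncard = X.ncard :=
    Set.ncard_inter_add_ncard_sdiff_eq_ncard X N (Set.toFinite X)
  have hN : (nbhd G (X \ N)).ncard + (X ∩ N).ncard ≤ N.ncard := by
    rw [← Set.ncard_union_eq (disjoint_nbhd_diff_nbhd_inter_nbhd G X)]
    exact Set.ncard_le_ncard
      (Set.union_subset (nbhd_mono G Set.sdiff_subset) Set.inter_subset_right)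
  omega

end

/-- The maximum of `d(X)` over all subsets equals the maximum over independent subsets. -/
theorem stmt0 (G : SimpleGraph V) :
    sSup {z : ℤ | ∃ X : Set V, dG G X = z} =
      sSup {z : ℤ | ∃ S : Set V, IsIndep G S ∧ dG G S = z} := by
  refine csSup_eq_csSup_of_forall_exists_le ?_ ?_
  · rintro _ ⟨X, rfl⟩
    exact ⟨_, ⟨_, isIndep_diff_nbhd G X, rfl⟩, dG_le_dG_diff_nbhd G X⟩
  · rintro _ ⟨S, -, rfl⟩
    exact ⟨_, ⟨S, rfl⟩, le_rfl⟩
end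

section
/- If G is a finite simple König-Egerváry graph, then diadem(G) = corona(G), i.e., the union of all maximum critical independent sets equals the union of all maximum independent sets. -/
open Set

variable {V : Type*} [Fintype V]

/-! For any maximum matching `M` and any `Y`, the matched vertices of `Y` inject into `N(Y)` via
their partners, so `d(Y) ≤ |V \ V(M)| = n - 2μ`. A maximum independent set `S` has
`N(S) ⊆ V \ S`, so `d(S) ≥ 2α - n`, and `2α - n = n - 2μ` is the König-Egerváry condition.
Then every maximum independent set is critical, and since critical independent sets are
independent, the maximum critical independent sets are exactly the maximum independent sets. -/

namespace SimpleGraph.Subgraph.IsMatching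

variable {G : SimpleGraph V} {M : G.Subgraph}

theorem ncard_verts (h : M.IsMatching) : M.verts.ncard = 2 * M.edgeSet.ncard := by
  classical
  have hfiber : ∀ e, Nat.card {v // h.toEdge v = e} = 2 := by
    rintro ⟨e, he⟩
    induction e using Sym2.ind with
    | h u w =>
      change Nat.card (h.toEdge ⁻¹' {_}) = 2
      rw [h.toEdge_preimage_singleton he, Nat.card_coe_set_eq, Set.ncard_pair]
      exact fun huw => G.ne_of_adj (M.adj_sub he) (congrArg Subtype.val huw)
  rw [← Nat.card_coe_set_eq, ← Nat.card_congr (Equiv.sigmaFiberEquiv h.toEdge),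
    Nat.card_sigma, Finset.sum_congr rfl fun e _ => hfiber e, Finset.sum_const, Finset.card_univ,
    smul_eq_mul, mul_comm, ← Nat.card_eq_fintype_card, Nat.card_coe_set_eq]

theorem ncard_verts_inter_le_ncard_nbhd (h : M.IsMatching) (Y : Set V) :
    (M.verts ∩ Y).ncard ≤ (nbhd G Y).ncard := by
  choose partner hpartner using fun v : ↥(M.verts ∩ Y) => (h v.2.1).exists
  have hinj : Function.Injective
      fun v => (⟨partner v, v.1, v.2.2, M.adj_sub (hpartner v)⟩ : nbhd G Y) := by
    intro v v' hvv'
    have hv : M.Adj (partner v) v := (hpartner v).symm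
    have hpartner_eq : partner v = partner v' := congrArg Subtype.val hvv'
    have hv' : M.Adj (partner v) v' := hpartner_eq ▸ (hpartner v').symm
    exact Subtype.ext (h.eq_of_adj_left hv hv')
  simpa only [Nat.card_coe_set_eq] using Nat.card_le_card_of_injective _ hinj

end SimpleGraph.Subgraph.IsMatching

theorem bddAbove_ncard_isIndep (G : SimpleGraph V) :
    BddAbove {n | ∃ S ⊆ univ, IsIndep G S ∧ S.ncard = n} :=
  ⟨Nat.card V, by rintro n ⟨S, -, -, rfl⟩; exact Set.ncard_le_card S⟩

theorem IsIndep.ncard_le_alpha {G : SimpleGraph V} {S : Set V} (hS : IsIndep G S) :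
    S.ncard ≤ alpha G :=
  le_csSup (bddAbove_ncard_isIndep G) ⟨S, subset_univ S, hS, rfl⟩

theorem exists_isIndep_ncard_eq_alpha (G : SimpleGraph V) :
    ∃ S, IsIndep G S ∧ S.ncard = alpha G := by
  obtain ⟨S, -, hS, hcard⟩ : alpha G ∈ {n | ∃ S ⊆ univ, IsIndep G S ∧ S.ncard = n} :=
    Nat.sSup_mem ⟨0, ∅, empty_subset _, fun _ h => h.elim, ncard_empty V⟩
      (bddAbove_ncard_isIndep G)
  exact ⟨S, hS, hcard⟩

theorem isMaxIndep_iff_ncard_eq_alpha {G : SimpleGraph V} {S : Set V} :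
    IsMaxIndep G S ↔ IsIndep G S ∧ S.ncard = alpha G := by
  constructor
  · rintro ⟨-, hS, hmax⟩
    obtain ⟨T, hT, hcard⟩ := exists_isIndep_ncard_eq_alpha G
    exact ⟨hS, hS.ncard_le_alpha.antisymm (hcard ▸ hmax T (subset_univ T) hT)⟩
  · rintro ⟨hS, hcard⟩
    exact ⟨subset_univ S, hS, fun T _ hT => hcard ▸ hT.ncard_le_alpha⟩

theorem exists_isMatching_ncard_edgeSet_eq_mu (G : SimpleGraph V) :
    ∃ M : G.Subgraph, M.IsMatching ∧ M.edgeSet.ncard = mu G := by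
  show mu G ∈ {n | ∃ M : G.Subgraph, M.IsMatching ∧ M.edgeSet.ncard = n}
  exact Nat.sSup_mem ⟨0, ⊥, fun _ hv => hv.elim, by simp⟩
    ⟨G.edgeSet.ncard, by rintro n ⟨M, -, rfl⟩; exact Set.ncard_le_ncard M.edgeSet_subset⟩

theorem dG_le_card_sub_two_mul_mu (G : SimpleGraph V) (Y : Set V) :
    dG G Y ≤ Fintype.card V - 2 * mu G := by
  obtain ⟨M, hM, hcard⟩ := exists_isMatching_ncard_edgeSet_eq_mu G
  have hmatched := hM.ncard_verts_inter_le_ncard_nbhd Y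
  have hunmatched : (Y \ M.verts).ncard ≤ M.vertsᶜ.ncard :=
    Set.ncard_le_ncard fun _ hv => hv.2
  have hsplit := Set.ncard_inter_add_ncard_sdiff_eq_ncard Y M.verts
  have hcompl := Set.ncard_add_ncard_compl M.verts
  rw [Set.inter_comm] at hsplit
  simp only [dG, dOn, Set.inter_univ, Nat.card_eq_fintype_card, hM.ncard_verts, hcard] at *
  omega

theorem IsIndep.two_mul_ncard_sub_card_le_dG {G : SimpleGraph V} {S : Set V} (hS : IsIndep G S) :
    2 * S.ncard - Fintype.card V ≤ dG G S := by
  have hnbhd : (nbhd G S).ncard ≤ Sᶜ.ncard :=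
    Set.ncard_le_ncard fun v ⟨u, hu, huv⟩ hv => hS u hu v hv huv
  have hcompl := Set.ncard_add_ncard_compl S
  simp only [dG, dOn, Set.inter_univ, Nat.card_eq_fintype_card] at *
  omega

namespace IsKE

variable {G : SimpleGraph V}

theorem isCritIndep_of_isMaxIndep (hKE : IsKE G) {S : Set V} (hS : IsMaxIndep G S) :
    IsCritIndep G S := by
  obtain ⟨hSindep, hcard⟩ := isMaxIndep_iff_ncard_eq_alpha.mp hS
  refine ⟨subset_univ S, hSindep, fun Y _ => ?_⟩
  have hdY := dG_le_card_sub_two_mul_mu G Y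
  have hdS := hSindep.two_mul_ncard_sub_card_le_dG
  unfold IsKE at hKE
  unfold dG at hdY hdS
  omega

theorem isMaxCritIndep_iff_isMaxIndep (hKE : IsKE G) {S : Set V} :
    IsMaxCritIndep G S ↔ IsMaxIndep G S := by
  obtain ⟨S₀, hS₀⟩ : ∃ S₀, IsMaxIndep G S₀ :=
    (exists_isIndep_ncard_eq_alpha G).imp fun _ => isMaxIndep_iff_ncard_eq_alpha.mpr
  constructor
  · rintro ⟨⟨-, hS, -⟩, hmax⟩
    exact ⟨subset_univ S, hS, fun T _ hT =>
      (hS₀.2.2 T (subset_univ T) hT).trans (hmax S₀ (hKE.isCritIndep_of_isMaxIndep hS₀))⟩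
  · intro hS
    exact ⟨hKE.isCritIndep_of_isMaxIndep hS, fun T hT => hS.2.2 T hT.1 hT.2.1⟩

end IsKE

/-- If `G` is König-Egerváry, then `diadem(G) = corona(G)`. -/
theorem stmt10 (G : SimpleGraph V) (hKE : IsKE G) : diadem G = corona G := by
  have hsets : {S | IsMaxCritIndep G S} = {S | IsMaxIndep G S} :=
    Set.ext fun _ => hKE.isMaxCritIndep_iff_isMaxIndep
  exact congrArg sUnion hsets
end

section
/- For any finite simple graph G, 2α(G) ≤ |core(G)| + |corona(G)|, where core(G) is the intersection and corona(G) the union of all maximum independent sets of G. -/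
open Set

variable {V : Type*} [Fintype V]

/-! Let `F` be a nonempty family of maximum independent sets and `T` a maximum independent set.
Then `X = ⋂₀ F \ T` is independent, and replacing `T ∩ N(X)` by `X` in `T` gives an independent
set, so `|X| ≤ |T ∩ N(X)| ≤ |T \ ⋃₀ F|`. Hence adding `T` to `F` loses no more from the
intersection than it adds to the union, and by induction over the family of all maximum
independent sets, `|core G| + |corona G| ≥ |S| + |S| = 2α(G)` for any single one `S`. -/

section

variable {G : SimpleGraph V}

lemma ncard_le_alpha_of_isIndep {S : Set V} (hS : IsIndep G S) : S.ncard ≤ alpha G :=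
  le_csSup ⟨Nat.card V, fun _ ⟨T, _, _, hn⟩ => hn ▸ Set.ncard_le_card T⟩
    ⟨S, Set.subset_univ S, hS, rfl⟩

lemma exists_isMaxIndep (G : SimpleGraph V) : ∃ S, IsMaxIndep G S := by
  have hne : {n | ∃ S ⊆ (Set.univ : Set V), IsIndep G S ∧ S.ncard = n}.Nonempty :=
    ⟨0, ∅, Set.empty_subset _, fun u hu => absurd hu (Set.notMem_empty u), Set.ncard_empty V⟩
  have hbdd : BddAbove {n | ∃ S ⊆ (Set.univ : Set V), IsIndep G S ∧ S.ncard = n} :=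
    ⟨Nat.card V, fun _ ⟨T, _, _, hn⟩ => hn ▸ Set.ncard_le_card T⟩
  obtain ⟨S, -, hS, hcard⟩ := Nat.sSup_mem hne hbdd
  exact ⟨S, Set.subset_univ S, hS, fun T _ hT => hcard ▸ ncard_le_alpha_of_isIndep hT⟩

lemma IsMaxIndep.ncard_eq_alpha {S : Set V} (hS : IsMaxIndep G S) : S.ncard = alpha G :=
  le_antisymm (ncard_le_alpha_of_isIndep hS.2.1) <|
    csSup_le ⟨S.ncard, S, hS.1, hS.2.1, rfl⟩ fun _ ⟨T, hTW, hT, hn⟩ => hn ▸ hS.2.2 T hTW hT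

lemma IsMaxIndep.ncard_le_ncard_inter_nbhd {T X : Set V} (hT : IsMaxIndep G T)
    (hX : IsIndep G X) (hXT : Disjoint X T) : X.ncard ≤ (T ∩ nbhd G X).ncard := by
  have hswap : IsIndep G ((T \ nbhd G X) ∪ X) := by
    rintro u (hu | hu) v (hv | hv) hadj
    · exact hT.2.1 u hu.1 v hv.1 hadj
    · exact hu.2 ⟨v, hv, hadj.symm⟩
    · exact hv.2 ⟨u, hu, hadj⟩
    · exact hX u hu v hv hadj
  have hle := hT.2.2 _ (Set.subset_univ _) hswap
  rw [Set.ncard_union_eq (hXT.symm.mono_left Set.sdiff_subset)] at hle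
  have hsplit := Set.ncard_inter_add_ncard_sdiff_eq_ncard T (nbhd G X)
  omega

lemma IsMaxIndep.ncard_sInter_diff_le {F : Set (Set V)} {T : Set V} (hT : IsMaxIndep G T)
    (hF : F.Nonempty) (hind : ∀ S ∈ F, IsIndep G S) :
    (⋂₀ F \ T).ncard ≤ (T \ ⋃₀ F).ncard := by
  obtain ⟨S₀, hS₀⟩ := hF
  have hX : IsIndep G (⋂₀ F \ T) := fun u hu v hv =>
    hind S₀ hS₀ u (hu.1 S₀ hS₀) v (hv.1 S₀ hS₀)
  refine (hT.ncard_le_ncard_inter_nbhd hX Set.disjoint_sdiff_left).trans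
    (Set.ncard_le_ncard ?_)
  rintro v ⟨hvT, u, huX, hadj⟩
  refine ⟨hvT, fun ⟨S, hS, hvS⟩ => ?_⟩
  exact hind S hS u (huX.1 S hS) v hvS hadj

lemma two_mul_alpha_le_ncard_sInter_add_ncard_sUnion {F : Set (Set V)} (hfin : F.Finite)
    (hne : F.Nonempty) (hmax : ∀ S ∈ F, IsMaxIndep G S) :
    2 * alpha G ≤ (⋂₀ F).ncard + (⋃₀ F).ncard := by
  induction F, hfin using Set.Finite.induction_on with
  | empty => exact absurd hne Set.not_nonempty_empty
  | @insert T F _ _ ih =>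
    have hT := hmax T (Set.mem_insert T F)
    rcases F.eq_empty_or_nonempty with rfl | hFne
    · simp only [insert_empty_eq, Set.sInter_singleton, Set.sUnion_singleton,
        hT.ncard_eq_alpha]
      omega
    have hmaxF : ∀ S ∈ F, IsMaxIndep G S := fun S hS => hmax S (Set.mem_insert_of_mem T hS)
    have hF := ih hFne hmaxF
    have hlost := hT.ncard_sInter_diff_le hFne fun S hS => (hmaxF S hS).2.1
    have hinter := Set.ncard_inter_add_ncard_sdiff_eq_ncard (⋂₀ F) T
    have hunion := Set.ncard_sdiff_add_ncard T (⋃₀ F)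
    rw [Set.sInter_insert, Set.sUnion_insert, Set.inter_comm]
    omega

end

/-- For any graph `G`, `2α(G) ≤ |core(G)| + |corona(G)|`. -/
theorem stmt16 (G : SimpleGraph V) :
    2 * alpha G ≤ (core G).ncard + (corona G).ncard := by
  obtain ⟨S, hS⟩ := exists_isMaxIndep G
  exact two_mul_alpha_le_ncard_sInter_add_ncard_sUnion (Set.toFinite _) ⟨S, hS⟩ fun _ h => h
end
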